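/- arXiv:2207.09626 — 6 statements merged into one kernel-verified Lean document; each statement's English description precedes it below -/
import Mathlib

section
/- Let k be a field of characteristic 0, n ≥ 1, and d ≥ 0. Let V be the k-vector space with basis {v_{i,j} : 1 ≤ i, 1 ≤ j ≤ n}, and let ω be the n-linear form ω = Σ_{i≥1} x_{i,1} ⊗ ⋯ ⊗ x_{i,n}, where x_{i,j} is dual to v_{i,j}. Then for every d-dimensional vector space W with an n-linear form η, setting m = d^n + d, there exists an injective linear map ι : W → V_m (the span of v_{i,j} with i ≤ m) such that the restriction of ω to V_m pulls back along ι to η. -/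
/-!
A linear map `W → V` is the same as a table of functionals `ℓ i j` on `W`, and the pullback
of `ω` along it is the sum over rows `i` of the rank-one forms `ℓ i 1 ⊗ ⋯ ⊗ ℓ i n`. Expanding
`η` in a basis `b` of `W` writes it as a sum of `d ^ n` rank-one forms `η(b_f) ⊗_j b^*_{f j}`.
Appending `d` rows `b^*_t ⊗ ⋯ ⊗ b^*_t` makes the map injective; their contribution `τ` is
absorbed by expanding `η - τ` instead of `η`.
-/

open Finset

section RankOneForm

variable {k W ι : Type*} [CommRing k] [AddCommGroup W] [Module k W] [Fintype ι]

noncomputable def rankOneForm (φ : ι → Module.Dual k W) : MultilinearMap k (fun _ : ι => W) k :=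
  (MultilinearMap.mkPiAlgebra k ι k).compLinearMap φ

@[simp]
theorem rankOneForm_apply (φ : ι → Module.Dual k W) (w : ι → W) :
    rankOneForm φ w = ∏ j, φ j (w j) := by
  simp [rankOneForm]

theorem rankOneForm_smul (a : ι → k) (φ : ι → Module.Dual k W) :
    rankOneForm (fun j => a j • φ j) = (∏ j, a j) • rankOneForm φ := by
  ext w
  simp [prod_mul_distrib]

theorem rankOneForm_coord_basis {κ : Type*} [DecidableEq κ] (b : Module.Basis κ k W)
    (f g : ι → κ) :
    rankOneForm (fun j => b.coord (f j)) (fun j => b (g j)) = if f = g then 1 else 0 := by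
  simp [Finsupp.single_apply, prod_boole, funext_iff, eq_comm]

end RankOneForm

section TableEmbedding

variable {k W ι R N : Type*} [CommRing k] [AddCommGroup W] [Module k W] [Fintype ι] [Fintype R]
  (e : R ↪ N) (ℓ : R → ι → Module.Dual k W)

noncomputable def tableEmbedding : W →ₗ[k] (N × ι →₀ k) :=
  Finsupp.lmapDomain k k (Prod.map e id) ∘ₗ
    (Finsupp.linearEquivFunOnFinite k k (R × ι)).symm.toLinearMap ∘ₗ
    LinearMap.pi fun p => ℓ p.1 p.2

theorem tableEmbedding_apply_embedding (v : W) (r : R) (j : ι) :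
    tableEmbedding e ℓ v (e r, j) = ℓ r j v :=
  Finsupp.mapDomain_apply (e.injective.prodMap Function.injective_id) _ (r, j)

theorem tableEmbedding_apply_of_notMem_range (v : W) {i : N} (hi : i ∉ Set.range e) (j : ι) :
    tableEmbedding e ℓ v (i, j) = 0 :=
  Finsupp.mapDomain_of_notMem_range _ _ fun ⟨p, hp⟩ => hi ⟨p.1, congrArg Prod.fst hp⟩

theorem tableEmbedding_injective (hℓ : ∀ v, (∀ r j, ℓ r j v = 0) → v = 0) :
    Function.Injective (tableEmbedding e ℓ) := by
  refine (injective_iff_map_eq_zero _).2 fun v hv => hℓ v fun r j => ?_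
  rw [← tableEmbedding_apply_embedding e ℓ v r j, hv, Finsupp.coe_zero, Pi.zero_apply]

theorem range_tableEmbedding_le_span {p : N → Prop} (hp : ∀ r, p (e r)) :
    LinearMap.range (tableEmbedding e ℓ) ≤
      Submodule.span k {x : N × ι →₀ k | ∃ i j, p i ∧ x = Finsupp.single (i, j) 1} := by
  rintro _ ⟨v, rfl⟩
  have hsupp : tableEmbedding e ℓ v ∈ Finsupp.supported k k {q : N × ι | p q.1} := by
    refine (Finsupp.mem_supported' k _).2 fun q hq => ?_
    refine tableEmbedding_apply_of_notMem_range e ℓ v ?_ q.2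
    rintro ⟨r, hr⟩
    exact hq (show p q.1 from hr ▸ hp r)
  rw [Finsupp.supported_eq_span_single] at hsupp
  refine Submodule.span_mono ?_ hsupp
  rintro _ ⟨⟨i, j⟩, hi, rfl⟩
  exact ⟨i, j, hi, rfl⟩

-- Without columns, every `i : N` would contribute the empty product `1`.
theorem finsum_prod_tableEmbedding [Nonempty ι] (w : ι → W) :
    ∑ᶠ i, ∏ j, tableEmbedding e ℓ (w j) (i, j) = ∑ r, rankOneForm (ℓ r) w := by
  classical
  obtain ⟨j₀⟩ := ‹Nonempty ι›
  have hsupp : (Function.support fun i => ∏ j, tableEmbedding e ℓ (w j) (i, j)) ⊆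
      ↑(univ.map e) := by
    intro i hi
    by_contra hne
    refine hi (prod_eq_zero (mem_univ j₀) (tableEmbedding_apply_of_notMem_range e ℓ _ ?_ j₀))
    rintro ⟨r, rfl⟩
    exact hne (by simp)
  rw [finsum_eq_sum_of_support_subset _ hsupp, sum_map]
  simp [tableEmbedding_apply_embedding]

end TableEmbedding

section BasisTable

variable {k W ι κ T : Type*} [CommRing k] [AddCommGroup W] [Module k W] [Fintype ι]
  [DecidableEq ι] [Fintype κ] [DecidableEq κ] [Fintype T]
  (b : Module.Basis κ k W) (η : MultilinearMap k (fun _ : ι => W) k) (j₀ : ι)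
  (ρ : T → ι → Module.Dual k W)

noncomputable def basisTable : (ι → κ) ⊕ T → ι → Module.Dual k W
  | .inl f => fun j =>
      (Pi.mulSingle j₀ ((η - ∑ t, rankOneForm (ρ t)) fun i => b (f i)) : ι → k) j • b.coord (f j)
  | .inr t => ρ t

theorem sum_rankOneForm_basisTable : ∑ r, rankOneForm (basisTable b η j₀ ρ r) = η := by
  refine Module.Basis.ext_multilinear (fun _ => b) fun g => ?_
  simp only [Fintype.sum_sum_type, basisTable, rankOneForm_smul, Finset.prod_pi_mulSingle',
    mem_univ, if_true, add_apply, _root_.sum_apply, smul_apply, rankOneForm_coord_basis,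
    smul_eq_mul, mul_ite, mul_one, mul_zero, sum_ite_eq', sub_apply, sub_add_cancel]

end BasisTable

theorem stmt_0_general (k : Type) [Field k] (n d : ℕ) (hn : 1 ≤ n)
    (W : Type) [AddCommGroup W] [Module k W] [FiniteDimensional k W]
    (hd : Module.finrank k W = d)
    (η : MultilinearMap k (fun _ : Fin n => W) k) :
    ∃ ι : W →ₗ[k] ((ℕ × Fin n) →₀ k),
      Function.Injective ι ∧
      LinearMap.range ι ≤ Submodule.span k
        {x : (ℕ × Fin n) →₀ k |
          ∃ i : ℕ, ∃ j : Fin n, i < d ^ n + d ∧ x = Finsupp.single (i, j) (1 : k)} ∧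
      ∀ w : Fin n → W, (∑ᶠ i : ℕ, ∏ j : Fin n, (ι (w j)) (i, j)) = η w := by
  have : NeZero n := NeZero.of_pos hn
  let b := Module.finBasisOfFinrankEq k W hd
  let ℓ := basisTable b η 0 fun t (_ : Fin n) => b.coord t
  let e := (Fintype.equivFin ((Fin n → Fin d) ⊕ Fin d)).toEmbedding.trans Fin.valEmbedding
  refine ⟨tableEmbedding e ℓ, tableEmbedding_injective e ℓ fun v hv => ?_,
    range_tableEmbedding_le_span e ℓ fun r => ?_, fun w => ?_⟩
  · exact b.forall_coord_eq_zero_iff.1 fun t => hv (.inr t) 0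
  · simpa [e] using (Fintype.equivFin _ r).isLt
  · rw [finsum_prod_tableEmbedding, ← _root_.sum_apply, sum_rankOneForm_basisTable]

/-- the explicit form `ω = Σ_{i} x_{i,1} ⊗ ⋯ ⊗ x_{i,n}` on the space with
basis indexed by `ℕ × Fin n`; every `d`-dimensional space with an `n`-linear form embeds
into the span of the basis vectors with first index `< d^n + d`. -/
theorem stmt_0 (k : Type) [Field k] [CharZero k] (n d : ℕ) (hn : 1 ≤ n)
    (W : Type) [AddCommGroup W] [Module k W] [FiniteDimensional k W]
    (hd : Module.finrank k W = d)
    (η : MultilinearMap k (fun _ : Fin n => W) k) :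
    ∃ ι : W →ₗ[k] ((ℕ × Fin n) →₀ k),
      Function.Injective ι ∧
      LinearMap.range ι ≤ Submodule.span k
        {x : (ℕ × Fin n) →₀ k |
          ∃ i : ℕ, ∃ j : Fin n, i < d ^ n + d ∧ x = Finsupp.single (i, j) (1 : k)} ∧
      ∀ w : Fin n → W, (∑ᶠ i : ℕ, ∏ j : Fin n, (ι (w j)) (i, j)) = η w :=
  stmt_0_general k n d hn W hd η
end

section
/- Let k be a field of characteristic 0 and n ≥ 1. The vector space V of countable dimension equipped with the n-form ω = Σ_{i≥1} x_{i,1} ⊗ ⋯ ⊗ x_{i,n} is a universal n-space: every finite-dimensional vector space equipped with an n-linear form admits an embedding into (V, ω). -/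
/-!
Expanding `η` in a basis `b` of `W` writes it as a finite sum of products of linear forms,
`η w = ∑_t η(b_{t_1}, …, b_{t_n}) ∏_j x_{t_j}(w_j)`. Each summand becomes one block of
coordinates `v_{i,1}, …, v_{i,n}` of `V`, with the scalar absorbed into one slot. To make the
resulting map injective, add for every basis vector `b_a` the two blocks
`(x_a, x_a, …, x_a)` and `(-x_a, x_a, …, x_a)`: their contributions to `ω` cancel, while
together they record every coordinate of the vector.
-/

open Function

namespace UniversalForm

variable {k W κ : Type*} [Field k] [AddCommGroup W] [Module k W]

section RowMap

variable [Fintype κ] {I : Type*} [Fintype I] (e : I → ℕ) (f : I → κ → Module.Dual k W)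

noncomputable def rowMap : W →ₗ[k] (ℕ × κ) →₀ k :=
  ∑ i, ∑ j, (Finsupp.lsingle (e i, j)).comp (f i j)

theorem rowMap_apply (w : W) (m : ℕ) (j : κ) :
    rowMap e f w (m, j) = ∑ i, if e i = m then f i j w else 0 := by
  classical
  simp only [rowMap, LinearMap.sum_apply, LinearMap.comp_apply, Finsupp.lsingle_apply,
    Finsupp.coe_finsetSum, Finset.sum_apply, Finsupp.single_apply, Prod.mk.injEq]
  refine Finset.sum_congr rfl fun i _ => ?_
  rw [Finset.sum_eq_single j (fun j' _ hj' => by simp [hj']) (by simp)]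
  by_cases h : e i = m <;> simp [h]

variable {e}

theorem rowMap_apply_self (he : Injective e) (w : W) (i : I) (j : κ) :
    rowMap e f w (e i, j) = f i j w := by
  rw [rowMap_apply, Finset.sum_eq_single i (fun i' _ hi' => if_neg (he.ne hi')) (by simp),
    if_pos rfl]

theorem rowMap_apply_of_notMem_range {m : ℕ} (hm : m ∉ Set.range e) (w : W) (j : κ) :
    rowMap e f w (m, j) = 0 :=
  (rowMap_apply e f w m j).trans <| Finset.sum_eq_zero fun i _ => if_neg fun h => hm ⟨i, h⟩

theorem injective_rowMap (he : Injective e) (hf : ∀ w, (∀ i j, f i j w = 0) → w = 0) :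
    Injective (rowMap e f) := by
  rw [← LinearMap.ker_eq_bot, LinearMap.ker_eq_bot']
  refine fun w hw => hf w fun i j => ?_
  rw [← rowMap_apply_self f he, hw, Finsupp.zero_apply]

/-- `κ` must be nonempty: with no slots every product is `1`, the support is all of `ℕ` and the
`finsum` takes its junk value `0`. -/
theorem finsum_prod_rowMap [Nonempty κ] (he : Injective e) (w : κ → W) :
    ∑ᶠ m, ∏ j, rowMap e f (w j) (m, j) = ∑ i, ∏ j, f i j (w j) := by
  classical
  have hsupp : (support fun m => ∏ j, rowMap e f (w j) (m, j)) ⊆ Finset.univ.image e := by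
    intro m hm
    by_contra hmem
    obtain ⟨j⟩ := ‹Nonempty κ›
    refine hm (Finset.prod_eq_zero (Finset.mem_univ j) (rowMap_apply_of_notMem_range f ?_ _ _))
    rintro ⟨i, rfl⟩
    exact hmem (by simp)
  rw [finsum_eq_finsetSum_of_support_subset _ hsupp, Finset.sum_image fun a _ b _ h => he h]
  simp only [rowMap_apply_self f he]

end RowMap

variable [DecidableEq κ] {ι : Type*}

noncomputable def basisRows (b : Module.Basis ι k W) (η : MultilinearMap k (fun _ : κ => W) k)
    (j₀ : κ) : (κ → ι) ⊕ (ι ⊕ ι) → κ → Module.Dual k W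
  | .inl t => fun j => (Pi.mulSingle j₀ (η fun j => b (t j)) : κ → k) j • b.coord (t j)
  | .inr (.inl a) => fun _ => b.coord a
  | .inr (.inr a) => fun j => (Pi.mulSingle j₀ (-1) : κ → k) j • b.coord a

variable (b : Module.Basis ι k W)

theorem eq_zero_of_basisRows_apply_eq_zero (η : MultilinearMap k (fun _ : κ => W) k) (j₀ : κ)
    {w : W} (hw : ∀ i j, basisRows b η j₀ i j w = 0) : w = 0 :=
  b.ext_elem fun a => by simpa [basisRows] using hw (.inr (.inl a)) j₀

variable [Fintype κ]

theorem prod_mulSingle_smul_apply (r : κ → Module.Dual k W) (j₀ : κ) (c : k) (w : κ → W) :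
    ∏ j, ((Pi.mulSingle j₀ c : κ → k) j • r j) (w j) = c * ∏ j, r j (w j) := by
  simp only [LinearMap.smul_apply, smul_eq_mul, Finset.prod_mul_distrib,
    Fintype.prod_pi_mulSingle']

variable [Fintype ι]

theorem _root_.MultilinearMap.eq_sum_basis (η : MultilinearMap k (fun _ : κ => W) k)
    (w : κ → W) : η w = ∑ t : κ → ι, η (fun j => b (t j)) * ∏ j, b.coord (t j) (w j) := by
  conv_lhs => rw [show w = fun j => ∑ a, b.repr (w j) a • b a from
    funext fun j => (b.sum_repr (w j)).symm, η.map_sum]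
  refine Finset.sum_congr rfl fun t _ => ?_
  rw [η.map_smul_univ, smul_eq_mul, mul_comm]
  rfl

theorem sum_prod_basisRows (η : MultilinearMap k (fun _ : κ => W) k) (j₀ : κ) (w : κ → W) :
    ∑ i, ∏ j, basisRows b η j₀ i j (w j) = η w := by
  have hcancel : ∀ a, ∏ j, basisRows b η j₀ (.inr (.inl a)) j (w j) +
      ∏ j, basisRows b η j₀ (.inr (.inr a)) j (w j) = 0 := fun a => by
    simp only [basisRows, prod_mulSingle_smul_apply (fun _ => b.coord a)]
    ring
  simp only [Fintype.sum_sum_type, ← Finset.sum_add_distrib, hcancel, Finset.sum_const_zero,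
    add_zero, η.eq_sum_basis b w]
  simp only [basisRows, prod_mulSingle_smul_apply (fun j => b.coord _)]

end UniversalForm

open UniversalForm in
theorem stmt_1_general (k : Type) [Field k] (n : ℕ) (hn : 1 ≤ n)
    (W : Type) [AddCommGroup W] [Module k W] [FiniteDimensional k W]
    (η : MultilinearMap k (fun _ : Fin n => W) k) :
    ∃ ι : W →ₗ[k] ((ℕ × Fin n) →₀ k),
      Function.Injective ι ∧
      ∀ w : Fin n → W, (∑ᶠ i : ℕ, ∏ j : Fin n, (ι (w j)) (i, j)) = η w := by
  let j₀ : Fin n := ⟨0, hn⟩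
  have : Nonempty (Fin n) := ⟨j₀⟩
  let f := basisRows (Module.finBasis k W) η j₀
  obtain ⟨e, he⟩ :=
    Countable.exists_injective_nat ((Fin n → Fin (Module.finrank k W)) ⊕ (Fin _ ⊕ Fin _))
  refine ⟨rowMap e f, injective_rowMap f he fun _ => eq_zero_of_basisRows_apply_eq_zero _ η j₀,
    fun w => ?_⟩
  rw [finsum_prod_rowMap f he, sum_prod_basisRows]

/-- the countable-dimensional space `(ℕ × Fin n) →₀ k` equipped with the
`n`-form `ω = Σ_{i≥0} x_{i,1} ⊗ ⋯ ⊗ x_{i,n}` is a universal `n`-space: every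
finite-dimensional space with an `n`-linear form embeds into it. -/
theorem stmt_1 (k : Type) [Field k] [CharZero k] (n : ℕ) (hn : 1 ≤ n)
    (W : Type) [AddCommGroup W] [Module k W] [FiniteDimensional k W]
    (η : MultilinearMap k (fun _ : Fin n => W) k) :
    ∃ ι : W →ₗ[k] ((ℕ × Fin n) →₀ k),
      Function.Injective ι ∧
      ∀ w : Fin n → W, (∑ᶠ i : ℕ, ∏ j : Fin n, (ι (w j)) (i, j)) = η w :=
  stmt_1_general k n hn W η
end

section
/- Let V and V' be vector spaces over k, equipped respectively with a multilinear form ω (of arity m) and a multilinear form ω' (of arity n). Equip V ⊕ V' with the pair of forms obtained by pulling back ω along the projection to V and ω' along the projection to V'. If every finite-dimensional space with an m-form embeds into (V, ω) and every finite-dimensional space with an n-form embeds into (V', ω'), then every finite-dimensional space equipped with a pair consisting of an m-form and an n-form embeds into V ⊕ V' with its pair of forms. -/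
theorem stmt_2_general (k : Type) [Field k] (m n : ℕ)
    (V V' : Type) [AddCommGroup V] [Module k V] [AddCommGroup V'] [Module k V']
    (ω : MultilinearMap k (fun _ : Fin m => V) k)
    (ω' : MultilinearMap k (fun _ : Fin n => V') k)
    (hV : ∀ (W : Type) [AddCommGroup W] [Module k W] [FiniteDimensional k W]
      (η : MultilinearMap k (fun _ : Fin m => W) k),
      ∃ f : W →ₗ[k] V, Function.Injective f ∧
        ∀ x : Fin m → W, ω (fun j => f (x j)) = η x)
    (hV' : ∀ (W : Type) [AddCommGroup W] [Module k W] [FiniteDimensional k W]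
      (η : MultilinearMap k (fun _ : Fin n => W) k),
      ∃ f : W →ₗ[k] V', Function.Injective f ∧
        ∀ x : Fin n → W, ω' (fun j => f (x j)) = η x) :
    ∀ (W : Type) [AddCommGroup W] [Module k W] [FiniteDimensional k W]
      (η₁ : MultilinearMap k (fun _ : Fin m => W) k)
      (η₂ : MultilinearMap k (fun _ : Fin n => W) k),
      ∃ f : W →ₗ[k] (V × V'), Function.Injective f ∧
        (∀ x : Fin m → W, ω (fun j => (f (x j)).1) = η₁ x) ∧
        (∀ x : Fin n → W, ω' (fun j => (f (x j)).2) = η₂ x) := by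
  intro W _ _ _ η₁ η₂
  obtain ⟨f₁, hf₁, h₁⟩ := hV W η₁
  obtain ⟨f₂, -, h₂⟩ := hV' W η₂
  exact ⟨f₁.prod f₂, Function.Injective.of_comp (f := Prod.fst) hf₁, h₁, h₂⟩

/-- if `(V, ω)` is a universal space for `m`-forms and `(V', ω')` is a
universal space for `n`-forms, then `V ⊕ V'` with the pair of pulled-back forms is
universal for pairs consisting of an `m`-form and an `n`-form. -/
theorem stmt_2 (k : Type) [Field k] [CharZero k] (m n : ℕ)
    (V V' : Type) [AddCommGroup V] [Module k V] [AddCommGroup V'] [Module k V']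
    (ω : MultilinearMap k (fun _ : Fin m => V) k)
    (ω' : MultilinearMap k (fun _ : Fin n => V') k)
    (hV : ∀ (W : Type) [AddCommGroup W] [Module k W] [FiniteDimensional k W]
      (η : MultilinearMap k (fun _ : Fin m => W) k),
      ∃ f : W →ₗ[k] V, Function.Injective f ∧
        ∀ x : Fin m → W, ω (fun j => f (x j)) = η x)
    (hV' : ∀ (W : Type) [AddCommGroup W] [Module k W] [FiniteDimensional k W]
      (η : MultilinearMap k (fun _ : Fin n => W) k),
      ∃ f : W →ₗ[k] V', Function.Injective f ∧
        ∀ x : Fin n → W, ω' (fun j => f (x j)) = η x) :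
    ∀ (W : Type) [AddCommGroup W] [Module k W] [FiniteDimensional k W]
      (η₁ : MultilinearMap k (fun _ : Fin m => W) k)
      (η₂ : MultilinearMap k (fun _ : Fin n => W) k),
      ∃ f : W →ₗ[k] (V × V'), Function.Injective f ∧
        (∀ x : Fin m → W, ω (fun j => (f (x j)).1) = η₁ x) ∧
        (∀ x : Fin n → W, ω' (fun j => (f (x j)).2) = η₂ x) :=
  stmt_2_general k m n V V' ω ω' hV hV'
end

section
/- Let G ⊆ GL(V) be the automorphism group of a countable-dimensional structured space (V, ω) that is both universal and homogeneous. Then G is linear-oligomorphic: for every d ≥ 0 there exists a finite-dimensional subspace E ⊆ V such that every d-dimensional subspace W of V satisfies gW ⊆ E for some g ∈ G. -/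
/-!
Take `E` to be the image in `V` of a `d`-universal space `E₀`. A `d`-dimensional subspace `W`,
with the forms of `V` restricted to it, embeds isometrically into `E₀` and hence into `E`;
homogeneity extends this isometry `W → E` to an automorphism `g` of `V`, and then `gW ⊆ E`.
-/

namespace StructuredSpace

variable {k ι U V W : Type*} [Field k] [AddCommGroup U] [Module k U] [AddCommGroup V] [Module k V]
  [AddCommGroup W] [Module k W] {a : ι → ℕ}

def PreservesForms (ω : ∀ i, MultilinearMap k (fun _ : Fin (a i) => V) k)
    (η : ∀ i, MultilinearMap k (fun _ : Fin (a i) => W) k) (f : W →ₗ[k] V) : Prop :=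
  ∀ i (x : Fin (a i) → W), ω i (fun j => f (x j)) = η i x

theorem PreservesForms.comp {ω : ∀ i, MultilinearMap k (fun _ : Fin (a i) => V) k}
    {η : ∀ i, MultilinearMap k (fun _ : Fin (a i) => W) k}
    {θ : ∀ i, MultilinearMap k (fun _ : Fin (a i) => U) k} {g : W →ₗ[k] V} {f : U →ₗ[k] W}
    (hg : PreservesForms ω η g) (hf : PreservesForms η θ f) : PreservesForms ω θ (g ∘ₗ f) :=
  fun i x => (hg i _).trans (hf i x)

def restrict (ω : ∀ i, MultilinearMap k (fun _ : Fin (a i) => V) k) (S : Submodule k V) :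
    ∀ i, MultilinearMap k (fun _ : Fin (a i) => S) k :=
  fun i => (ω i).compLinearMap fun _ => S.subtype

def IsHomogeneous (ω : ∀ i, MultilinearMap k (fun _ : Fin (a i) => V) k) : Prop :=
  ∀ (S S' : Submodule k V) [FiniteDimensional k S] [FiniteDimensional k S'] (φ : S ≃ₗ[k] S'),
    (∀ i (x : Fin (a i) → S), ω i (fun j => ((φ (x j) : S') : V)) = ω i (fun j => (x j : V))) →
    ∃ g : V ≃ₗ[k] V, PreservesForms ω ω g ∧ ∀ u : S, g (u : V) = ((φ u : S') : V)

theorem IsHomogeneous.exists_map_eq_range {ω : ∀ i, MultilinearMap k (fun _ : Fin (a i) => V) k}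
    (hω : IsHomogeneous ω) (S : Submodule k V) [FiniteDimensional k S] {h : S →ₗ[k] V}
    (h_inj : Function.Injective h) (hh : PreservesForms ω (restrict ω S) h) :
    ∃ g : V ≃ₗ[k] V, PreservesForms ω ω g ∧ S.map (g : V →ₗ[k] V) = LinearMap.range h := by
  obtain ⟨g, hg, hgS⟩ := hω S _ (LinearEquiv.ofInjective h h_inj) hh
  have hg_restrict : (g : V →ₗ[k] V) ∘ₗ S.subtype = h := LinearMap.ext hgS
  refine ⟨g, hg, ?_⟩
  rw [← hg_restrict, LinearMap.range_comp, Submodule.range_subtype]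

end StructuredSpace

theorem stmt_8_general (k V : Type) [Field k] [AddCommGroup V] [Module k V]
    (r : ℕ) (a : Fin r → ℕ)
    (ω : ∀ i : Fin r, MultilinearMap k (fun _ : Fin (a i) => V) k)
    (huniv : ∀ (W : Type) [AddCommGroup W] [Module k W] [FiniteDimensional k W]
      (η : ∀ i : Fin r, MultilinearMap k (fun _ : Fin (a i) => W) k),
      ∃ f : W →ₗ[k] V, Function.Injective f ∧
        ∀ (i : Fin r) (x : Fin (a i) → W), ω i (fun j => f (x j)) = η i x)
    (hduniv : ∀ d : ℕ, ∃ (E₀ : Type) (_ : AddCommGroup E₀) (_ : Module k E₀)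
      (_ : FiniteDimensional k E₀)
      (η₀ : ∀ i : Fin r, MultilinearMap k (fun _ : Fin (a i) => E₀) k),
      ∀ (W : Type) [AddCommGroup W] [Module k W] [FiniteDimensional k W]
        (η : ∀ i : Fin r, MultilinearMap k (fun _ : Fin (a i) => W) k),
        Module.finrank k W = d →
        ∃ f : W →ₗ[k] E₀, Function.Injective f ∧
          ∀ (i : Fin r) (x : Fin (a i) → W), η₀ i (fun j => f (x j)) = η i x)
    (hhomog : ∀ (W W' : Submodule k V) [FiniteDimensional k W] [FiniteDimensional k W']
      (φ : W ≃ₗ[k] W'),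
      (∀ (i : Fin r) (x : Fin (a i) → W),
        ω i (fun j => ((φ (x j) : W') : V)) = ω i (fun j => ((x j : V)))) →
      ∃ g : V ≃ₗ[k] V,
        (∀ (i : Fin r) (x : Fin (a i) → V), ω i (fun j => g (x j)) = ω i x) ∧
        ∀ u : W, g (u : V) = ((φ u : W') : V)) :
    ∀ d : ℕ, ∃ E : Submodule k V, FiniteDimensional k E ∧
      ∀ (W : Submodule k V) [FiniteDimensional k W], Module.finrank k W = d →
        ∃ g : V ≃ₗ[k] V,
          (∀ (i : Fin r) (x : Fin (a i) → V), ω i (fun j => g (x j)) = ω i x) ∧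
          W.map (g : V →ₗ[k] V) ≤ E := by
  intro d
  obtain ⟨E₀, _, _, _, η₀, hE₀⟩ := hduniv d
  obtain ⟨ι, hι_inj, hι⟩ := huniv E₀ η₀
  refine ⟨LinearMap.range ι, inferInstance, fun W _ hW => ?_⟩
  obtain ⟨f, hf_inj, hf⟩ := hE₀ W (StructuredSpace.restrict ω W) hW
  obtain ⟨g, hg, hgW⟩ :=
    StructuredSpace.IsHomogeneous.exists_map_eq_range hhomog W (hι_inj.comp hf_inj)
      (StructuredSpace.PreservesForms.comp hι hf)
  exact ⟨g, hg, hgW ▸ LinearMap.range_comp_le_range f ι⟩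

/-- the automorphism group `G` of a countable-dimensional structured space
`(V, ω)` that is universal (with `d`-universal finite-dimensional structured spaces
existing for each `d`) and homogeneous is linear-oligomorphic: for every `d` there is a
finite-dimensional subspace `E ⊆ V` such that every `d`-dimensional subspace `W` of `V`
satisfies `gW ⊆ E` for some `g ∈ G`. -/
theorem stmt_8 (k V : Type) [Field k] [CharZero k] [AddCommGroup V] [Module k V]
    (r : ℕ) (a : Fin r → ℕ)
    (ω : ∀ i : Fin r, MultilinearMap k (fun _ : Fin (a i) => V) k)
    (hcount : Nonempty (Module.Basis ℕ k V))
    (huniv : ∀ (W : Type) [AddCommGroup W] [Module k W] [FiniteDimensional k W]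
      (η : ∀ i : Fin r, MultilinearMap k (fun _ : Fin (a i) => W) k),
      ∃ f : W →ₗ[k] V, Function.Injective f ∧
        ∀ (i : Fin r) (x : Fin (a i) → W), ω i (fun j => f (x j)) = η i x)
    (hduniv : ∀ d : ℕ, ∃ (E₀ : Type) (_ : AddCommGroup E₀) (_ : Module k E₀)
      (_ : FiniteDimensional k E₀)
      (η₀ : ∀ i : Fin r, MultilinearMap k (fun _ : Fin (a i) => E₀) k),
      ∀ (W : Type) [AddCommGroup W] [Module k W] [FiniteDimensional k W]
        (η : ∀ i : Fin r, MultilinearMap k (fun _ : Fin (a i) => W) k),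
        Module.finrank k W = d →
        ∃ f : W →ₗ[k] E₀, Function.Injective f ∧
          ∀ (i : Fin r) (x : Fin (a i) → W), η₀ i (fun j => f (x j)) = η i x)
    (hhomog : ∀ (W W' : Submodule k V) [FiniteDimensional k W] [FiniteDimensional k W']
      (φ : W ≃ₗ[k] W'),
      (∀ (i : Fin r) (x : Fin (a i) → W),
        ω i (fun j => ((φ (x j) : W') : V)) = ω i (fun j => ((x j : V)))) →
      ∃ g : V ≃ₗ[k] V,
        (∀ (i : Fin r) (x : Fin (a i) → V), ω i (fun j => g (x j)) = ω i x) ∧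
        ∀ u : W, g (u : V) = ((φ u : W') : V)) :
    ∀ d : ℕ, ∃ E : Submodule k V, FiniteDimensional k E ∧
      ∀ (W : Submodule k V) [FiniteDimensional k W], Module.finrank k W = d →
        ∃ g : V ≃ₗ[k] V,
          (∀ (i : Fin r) (x : Fin (a i) → V), ω i (fun j => g (x j)) = ω i x) ∧
          W.map (g : V →ₗ[k] V) ≤ E :=
  stmt_8_general k V r a ω huniv hduniv hhomog
end

section
/- Let C be a category with all morphisms monic, and let Ω and Ω' be f-injective ind-objects of C. Given embeddings δ : X → Ω_{n_0} and δ' : X' → Ω'_{m_0} and a morphism γ : X → X' in C, there exists an isomorphism of ind-objects α : Ω → Ω' whose restriction along δ agrees with δ' ∘ γ. -/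
open CategoryTheory

universe u v

/-- An ind-object of a category `C`: a sequential diagram `X₁ → X₂ → ⋯` in `C`. -/
structure IndObject (C : Type u) [Category.{v} C] where
  obj : ℕ → C
  map : ∀ n : ℕ, obj n ⟶ obj (n + 1)

namespace IndObject

variable {C : Type u} [Category.{v} C]

/-- The transition morphism `obj n ⟶ obj m` of an ind-object, for `n ≤ m`. -/
def trans (Ω : IndObject C) : ∀ {n m : ℕ}, n ≤ m → (Ω.obj n ⟶ Ω.obj m) :=
  fun {n m} h =>
    Nat.leRecOn (C := fun m => Ω.obj n ⟶ Ω.obj m) h (fun {l} g => g ≫ Ω.map l) (𝟙 _)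

/-- An ind-object is universal if every object of `C` embeds into it. -/
def Universal (Ω : IndObject C) : Prop :=
  ∀ X : C, ∃ n : ℕ, Nonempty (X ⟶ Ω.obj n)

/-- An ind-object is f-injective if every embedding of an object of `C` into it extends
along any morphism of `C`. -/
def FInjective (Ω : IndObject C) : Prop :=
  ∀ ⦃X Y : C⦄ (α : X ⟶ Y) (n : ℕ) (γ : X ⟶ Ω.obj n),
    ∃ (m : ℕ) (h : n ≤ m) (β : Y ⟶ Ω.obj m), α ≫ β = γ ≫ Ω.trans h

end IndObject


/-- An isomorphism of ind-objects: compatible families of morphisms in both directions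
whose composites are the transition maps. -/
structure IndIso {C : Type u} [Category.{v} C] (Ω Ω' : IndObject C) where
  a : ℕ → ℕ
  b : ℕ → ℕ
  amono : Monotone a
  bmono : Monotone b
  fwd : ∀ n : ℕ, Ω.obj n ⟶ Ω'.obj (a n)
  bwd : ∀ n : ℕ, Ω'.obj n ⟶ Ω.obj (b n)
  fwd_comm : ∀ {n m : ℕ} (h : n ≤ m), Ω.trans h ≫ fwd m = fwd n ≫ Ω'.trans (amono h)
  bwd_comm : ∀ {n m : ℕ} (h : n ≤ m), Ω'.trans h ≫ bwd m = bwd n ≫ Ω.trans (bmono h)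
  le_ba : ∀ n : ℕ, n ≤ b (a n)
  le_ab : ∀ n : ℕ, n ≤ a (b n)
  fwd_bwd : ∀ n : ℕ, fwd n ≫ bwd (a n) = Ω.trans (le_ba n)
  bwd_fwd : ∀ n : ℕ, bwd n ≫ fwd (b n) = Ω'.trans (le_ab n)


/-!
Back and forth. Start from a map `Ω.obj n₀ ⟶ Ω'.obj q₀` extending `γ ≫ δ'` along `δ`. Given a
current map `u : Ω.obj p ⟶ Ω'.obj q`, f-injectivity of `Ω` extends the identity of `Ω.obj p`
along `u`, giving `v : Ω'.obj q ⟶ Ω.obj p'` with `u ≫ v` a transition map; f-injectivity of `Ω'`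
likewise gives the next `u'` with `v ≫ u'` a transition map. The resulting zigzag
`Ω.obj p₀ ⟶ Ω'.obj q₀ ⟶ Ω.obj p₁ ⟶ Ω'.obj q₁ ⟶ ⋯` is automatically compatible with the transition
maps, hence an isomorphism of ind-objects.
-/

namespace IndObject

variable {C : Type u} [Category.{v} C]

lemma trans_refl (Ω : IndObject C) {n : ℕ} (h : n ≤ n) : Ω.trans h = 𝟙 _ :=
  Nat.leRecOn_self _

lemma trans_succ (Ω : IndObject C) {n m : ℕ} (h : n ≤ m) (h' : n ≤ m + 1) :
    Ω.trans h' = Ω.trans h ≫ Ω.map m :=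
  Nat.leRecOn_succ h _

lemma trans_comp_trans (Ω : IndObject C) {n m k : ℕ} (h₁ : n ≤ m) (h₂ : m ≤ k) :
    Ω.trans h₁ ≫ Ω.trans h₂ = Ω.trans (h₁.trans h₂) := by
  induction k, h₂ using Nat.le_induction with
  | base => rw [trans_refl, Category.comp_id]
  | succ k h₂ ih =>
    rw [Ω.trans_succ h₂, Ω.trans_succ (h₁.trans h₂), ← Category.assoc, ih]

variable {Ω Ω' : IndObject C}

structure Zigzag (Ω Ω' : IndObject C) where
  p : ℕ → ℕ
  q : ℕ → ℕ
  p_lt : ∀ k, p k < p (k + 1)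
  q_lt : ∀ k, q k < q (k + 1)
  u : ∀ k, Ω.obj (p k) ⟶ Ω'.obj (q k)
  v : ∀ k, Ω'.obj (q k) ⟶ Ω.obj (p (k + 1))
  u_comp_v : ∀ k, u k ≫ v k = Ω.trans (p_lt k).le
  v_comp_u : ∀ k, v k ≫ u (k + 1) = Ω'.trans (q_lt k).le

namespace Zigzag

def shift (Z : Zigzag Ω Ω') : Zigzag Ω' Ω where
  p := Z.q
  q k := Z.p (k + 1)
  p_lt := Z.q_lt
  q_lt k := Z.p_lt (k + 1)
  u := Z.v
  v k := Z.u (k + 1)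
  u_comp_v := Z.v_comp_u
  v_comp_u k := Z.u_comp_v (k + 1)

variable (Z : Zigzag Ω Ω')

lemma strictMono_p : StrictMono Z.p := strictMono_nat_of_lt_succ Z.p_lt

lemma strictMono_q : StrictMono Z.q := strictMono_nat_of_lt_succ Z.q_lt

lemma trans_comp_u {k l : ℕ} (hkl : k ≤ l) :
    Ω.trans (Z.strictMono_p.monotone hkl) ≫ Z.u l
      = Z.u k ≫ Ω'.trans (Z.strictMono_q.monotone hkl) := by
  induction l, hkl using Nat.le_induction with
  | base => rw [trans_refl, trans_refl, Category.id_comp, Category.comp_id]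
  | succ l hkl ih =>
    rw [← Ω.trans_comp_trans (Z.strictMono_p.monotone hkl) (Z.p_lt l).le, ← Z.u_comp_v,
      Category.assoc, Category.assoc, Z.v_comp_u, ← Category.assoc, ih, Category.assoc,
      Ω'.trans_comp_trans]

lemma trans_comp_v {k l : ℕ} (hkl : k ≤ l) :
    Ω'.trans (Z.strictMono_q.monotone hkl) ≫ Z.v l
      = Z.v k ≫ Ω.trans (Z.strictMono_p.monotone (Nat.succ_le_succ hkl)) :=
  Z.shift.trans_comp_u hkl

def toIndIso : IndIso Ω Ω' where
  a := Z.q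
  b n := Z.p (n + 1)
  amono := Z.strictMono_q.monotone
  bmono _ _ h := Z.strictMono_p.monotone (Nat.succ_le_succ h)
  fwd n := Ω.trans Z.strictMono_p.le_apply ≫ Z.u n
  bwd n := Ω'.trans Z.strictMono_q.le_apply ≫ Z.v n
  fwd_comm {n m} h := by
    rw [← Category.assoc, Ω.trans_comp_trans,
      ← Ω.trans_comp_trans Z.strictMono_p.le_apply (Z.strictMono_p.monotone h),
      Category.assoc, Z.trans_comp_u h, Category.assoc]
  bwd_comm {n m} h := by
    rw [← Category.assoc, Ω'.trans_comp_trans,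
      ← Ω'.trans_comp_trans Z.strictMono_q.le_apply (Z.strictMono_q.monotone h),
      Category.assoc, Z.trans_comp_v h, Category.assoc]
  le_ba n := Z.strictMono_p.le_apply.trans
    (Z.strictMono_p.monotone (Z.strictMono_q.le_apply.trans (Nat.le_succ _)))
  le_ab n := Z.strictMono_q.le_apply.trans
    (Z.strictMono_q.monotone ((Nat.le_succ n).trans Z.strictMono_p.le_apply))
  fwd_bwd n := by
    rw [Category.assoc, ← Category.assoc (Z.u n), ← Z.trans_comp_u Z.strictMono_q.le_apply,
      Category.assoc, Z.u_comp_v, Ω.trans_comp_trans, Ω.trans_comp_trans]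
  bwd_fwd n := by
    rw [Category.assoc, Z.trans_comp_u Z.strictMono_p.le_apply,
      ← Category.assoc (Z.v n), Z.v_comp_u,
      Ω'.trans_comp_trans, Ω'.trans_comp_trans]

end Zigzag

structure StageHom (Ω Ω' : IndObject C) where
  p : ℕ
  q : ℕ
  hom : Ω.obj p ⟶ Ω'.obj q

structure StageHom.Extension (s : StageHom Ω Ω') where
  next : StageHom Ω Ω'
  p_lt : s.p < next.p
  q_lt : s.q < next.q
  back : Ω'.obj s.q ⟶ Ω.obj next.p
  hom_comp_back : s.hom ≫ back = Ω.trans p_lt.le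
  back_comp_hom : back ≫ next.hom = Ω'.trans q_lt.le

lemma FInjective.nonempty_extension (hΩ : Ω.FInjective) (hΩ' : Ω'.FInjective)
    (s : StageHom Ω Ω') : Nonempty s.Extension := by
  obtain ⟨m, hm, back, h_back⟩ := hΩ s.hom s.p (𝟙 _)
  obtain ⟨m', hm', next, h_next⟩ := hΩ' (back ≫ Ω.map m) s.q (𝟙 _)
  refine ⟨⟨⟨m + 1, m' + 1, next ≫ Ω'.map m'⟩, Nat.lt_succ_of_le hm, Nat.lt_succ_of_le hm',
    back ≫ Ω.map m, ?_, ?_⟩⟩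
  · rw [← Category.assoc, h_back, Category.id_comp, ← Ω.trans_succ]
  · rw [← Category.assoc, h_next, Category.id_comp, ← Ω'.trans_succ]

noncomputable def FInjective.iterate (hΩ : Ω.FInjective) (hΩ' : Ω'.FInjective)
    (s : StageHom Ω Ω') : ℕ → StageHom Ω Ω'
  | 0 => s
  | k + 1 => (hΩ.nonempty_extension hΩ' (hΩ.iterate hΩ' s k)).some.next

noncomputable def FInjective.zigzag (hΩ : Ω.FInjective) (hΩ' : Ω'.FInjective)
    (s : StageHom Ω Ω') : Zigzag Ω Ω' where
  p k := (hΩ.iterate hΩ' s k).p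
  q k := (hΩ.iterate hΩ' s k).q
  p_lt k := (hΩ.nonempty_extension hΩ' (hΩ.iterate hΩ' s k)).some.p_lt
  q_lt k := (hΩ.nonempty_extension hΩ' (hΩ.iterate hΩ' s k)).some.q_lt
  u k := (hΩ.iterate hΩ' s k).hom
  v k := (hΩ.nonempty_extension hΩ' (hΩ.iterate hΩ' s k)).some.back
  u_comp_v k := (hΩ.nonempty_extension hΩ' (hΩ.iterate hΩ' s k)).some.hom_comp_back
  v_comp_u k := (hΩ.nonempty_extension hΩ' (hΩ.iterate hΩ' s k)).some.back_comp_hom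

lemma FInjective.exists_indIso_fwd_eq (hΩ : Ω.FInjective) (hΩ' : Ω'.FInjective) {p q : ℕ}
    (u : Ω.obj p ⟶ Ω'.obj q) : ∃ (e : IndIso Ω Ω') (h : q ≤ e.a p), e.fwd p = u ≫ Ω'.trans h :=
  let Z := hΩ.zigzag hΩ' ⟨p, q, u⟩
  ⟨Z.toIndIso, Z.strictMono_q.monotone (Nat.zero_le p), Z.trans_comp_u (Nat.zero_le p)⟩

end IndObject

theorem stmt_10_general (C : Type u) [Category.{v} C]
    (Ω Ω' : IndObject C) (hΩ : Ω.FInjective) (hΩ' : Ω'.FInjective)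
    {X X' : C} (γ : X ⟶ X') (n₀ m₀ : ℕ)
    (δ : X ⟶ Ω.obj n₀) (δ' : X' ⟶ Ω'.obj m₀) :
    ∃ (e : IndIso Ω Ω') (h : m₀ ≤ e.a n₀),
      δ ≫ e.fwd n₀ = γ ≫ δ' ≫ Ω'.trans h := by
  obtain ⟨q₀, hq₀, u₀, hu₀⟩ := hΩ' δ m₀ (γ ≫ δ')
  obtain ⟨e, h, he⟩ := hΩ.exists_indIso_fwd_eq hΩ' u₀
  refine ⟨e, hq₀.trans h, ?_⟩
  rw [he, reassoc_of% hu₀, Ω'.trans_comp_trans]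

/-- back-and-forth. Given f-injective ind-objects `Ω`, `Ω'`, embeddings
`δ : X → Ω`, `δ' : X' → Ω'` and a morphism `γ : X → X'`, there is an isomorphism of
ind-objects `α : Ω ≅ Ω'` with `α ∘ δ = δ' ∘ γ`. -/
theorem stmt_10 (C : Type u) [Category.{v} C]
    (hmono : ∀ {X Y : C} (f : X ⟶ Y), Mono f)
    (Ω Ω' : IndObject C) (hΩ : Ω.FInjective) (hΩ' : Ω'.FInjective)
    {X X' : C} (γ : X ⟶ X') (n₀ m₀ : ℕ)
    (δ : X ⟶ Ω.obj n₀) (δ' : X' ⟶ Ω'.obj m₀) :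
    ∃ (e : IndIso Ω Ω') (h : m₀ ≤ e.a n₀),
      δ ≫ e.fwd n₀ = γ ≫ δ' ≫ Ω'.trans h :=
  stmt_10_general C Ω Ω' hΩ hΩ' γ n₀ m₀ δ δ'
end

section
/- Let C and D be categories with all morphisms monic, suppose C has a universal ind-object, and let Φ : C → D be a functor. The following are equivalent: (i) Φ satisfies the embedding property (every object Y of D embeds into Φ(Z) for some object Z of C); (ii) Φ maps some universal ind-object of C to a universal ind-object of D; (iii) Φ maps every universal ind-object of C to a universal ind-object of D. -/
open CategoryTheory

universe u v

universe u' v'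

/-- The termwise application of a functor to an ind-object. -/
def mapInd {C : Type u} [Category.{v} C] {D : Type u'} [Category.{v'} D]
    (Φ : C ⥤ D) (Ω : IndObject C) : IndObject D where
  obj n := Φ.obj (Ω.obj n)
  map n := Φ.map (Ω.map n)

def EmbeddingProperty {C : Type u} [Category.{v} C] {D : Type u'} [Category.{v'} D]
    (Φ : C ⥤ D) : Prop :=
  ∀ Y : D, ∃ Z : C, Nonempty (Y ⟶ Φ.obj Z)

section EmbeddingProperty

variable {C : Type u} [Category.{v} C] {D : Type u'} [Category.{v'} D] {Φ : C ⥤ D}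

theorem IndObject.Universal.mapInd (hΦ : EmbeddingProperty Φ) {Ω : IndObject C}
    (hΩ : Ω.Universal) : (mapInd Φ Ω).Universal := fun Y =>
  let ⟨Z, ⟨f⟩⟩ := hΦ Y
  let ⟨n, ⟨g⟩⟩ := hΩ Z
  ⟨n, ⟨f ≫ Φ.map g⟩⟩

theorem EmbeddingProperty.of_universal_mapInd {Ω : IndObject C}
    (hΩ : (mapInd Φ Ω).Universal) : EmbeddingProperty Φ := fun Y =>
  let ⟨n, ⟨f⟩⟩ := hΩ Y
  ⟨Ω.obj n, ⟨f⟩⟩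

end EmbeddingProperty

theorem stmt_15_general (C : Type u) [Category.{v} C] (D : Type u') [Category.{v'} D]
    (Φ : C ⥤ D) (hU : ∃ Ω : IndObject C, Ω.Universal) :
    ((∀ Y : D, ∃ Z : C, Nonempty (Y ⟶ Φ.obj Z)) ↔
        (∃ Ω : IndObject C, Ω.Universal ∧ (mapInd Φ Ω).Universal)) ∧
    ((∀ Y : D, ∃ Z : C, Nonempty (Y ⟶ Φ.obj Z)) ↔
        (∀ Ω : IndObject C, Ω.Universal → (mapInd Φ Ω).Universal)) := by
  obtain ⟨Ω₀, hΩ₀⟩ := hU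
  change (EmbeddingProperty Φ ↔ _) ∧ (EmbeddingProperty Φ ↔ _)
  refine ⟨⟨fun hΦ => ⟨Ω₀, hΩ₀, hΩ₀.mapInd hΦ⟩, ?_⟩, ⟨fun hΦ _ hΩ => hΩ.mapInd hΦ, ?_⟩⟩
  · rintro ⟨Ω, -, hΩ⟩
    exact .of_universal_mapInd hΩ
  · intro h
    exact .of_universal_mapInd (h Ω₀ hΩ₀)

/-- for a functor `Φ : C → D` between categories with all morphisms monic,
with `C` having a universal ind-object, the following are equivalent: (i) `Φ` has the
embedding property; (ii) `Φ` maps some universal ind-object to a universal ind-object;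
(iii) `Φ` maps every universal ind-object to a universal ind-object. -/
theorem stmt_15 (C : Type u) [Category.{v} C] (D : Type u') [Category.{v'} D]
    (hmonoC : ∀ {X Y : C} (f : X ⟶ Y), Mono f)
    (hmonoD : ∀ {X Y : D} (f : X ⟶ Y), Mono f)
    (Φ : C ⥤ D) (hU : ∃ Ω : IndObject C, Ω.Universal) :
    ((∀ Y : D, ∃ Z : C, Nonempty (Y ⟶ Φ.obj Z)) ↔
        (∃ Ω : IndObject C, Ω.Universal ∧ (mapInd Φ Ω).Universal)) ∧
    ((∀ Y : D, ∃ Z : C, Nonempty (Y ⟶ Φ.obj Z)) ↔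
        (∀ Ω : IndObject C, Ω.Universal → (mapInd Φ Ω).Universal)) :=
  stmt_15_general C D Φ hU
end
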